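/- arXiv:1407.2774 — 4 statements merged into one kernel-verified Lean document; each statement's English description precedes it below -/
import Mathlib

section
/- For every k ≥ 2 and every planting distribution Q : {−1,1}^k → [0,1] whose distribution complexity r = r(Q) satisfies r ≥ 2, there exists a constant C > 0 such that for every ε > 0 there exists N with the following property. For every n ≥ N and every integer m ≥ C·n^{r/2}·log n, there exists an estimator f mapping m-tuples of k-clauses over n variables to assignments in {−1,1}^n, such that for every assignment σ ∈ {−1,1}^n, when C₁, …, C_m are drawn independently and identically from the distribution Q_σ on k-clauses, the probability that f(C₁,…,C_m) = σ or f(C₁,…,C_m) = −σ is at least 1 − ε. -/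
/-!
The estimator is maximum likelihood. It prefers a wrong assignment `s` to `σ` only on samples at
least as likely under `Q_s` as under `Q_σ`; these have `Q_σ`-probability at most `ρ ^ m`, where
`ρ = 1 - H / 2 ≤ exp (-H / 2)` is the Bhattacharyya coefficient of `Q_σ` and `Q_s` and `H` their
squared Hellinger distance. Parametrizing a clause by its variables `v` and its evaluation under
`σ` turns `H` into a sum over `v` of the Hellinger distance between `Q` and `Q` flipped on the
coordinates where `σ` and `s` disagree along `v`. A nonzero Fourier coefficient `Q̂(S)` forbids `Q`
to be invariant under a flip meeting `S` an odd number of times, so such `v` contribute at least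
some `δ > 0`, and they form a fraction of order `min(d, n - d) / n` of all `v`, `d` being the
Hamming distance from `σ` to `s`. Hence `ρ ^ m ≤ q ^ min(d, n - d)` with `q = exp (-β m / n)`, and a
union bound over `s ≠ ±σ` bounds the failure probability by `2 ((1 + q) ^ n - 1) = O(1 / n)` as
soon as `m ≥ C n log n`, which `m ≥ C n ^ (r / 2) log n` implies for `r ≥ 2`.
-/

/-- The real sign `±1` encoded by a boolean (`true ↦ 1`, `false ↦ -1`). -/
def sgn (b : Bool) : ℝ := if b then 1 else -1

/-- The Fourier coefficient `Q̂(S) = 2⁻ᵏ ∑_{x ∈ {±1}ᵏ} Q(x) ∏_{i ∈ S} xᵢ`. -/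
noncomputable def cubeFourierCoeff {k : ℕ} (Q : (Fin k → Bool) → ℝ)
    (S : Finset (Fin k)) : ℝ :=
  ((2 : ℝ) ^ k)⁻¹ * ∑ x : Fin k → Bool, Q x * ∏ i ∈ S, sgn (x i)

/-- A `k`-clause over `n` boolean variables: an ordered `k`-tuple of literals (a literal is
a pair (variable, sign), the sign `true` standing for `+1` and `false` for `-1`) whose
variables are pairwise distinct. -/
def Clause (k n : ℕ) : Type :=
  {c : Fin k → Fin n × Bool // Function.Injective fun i => (c i).1}

instance (k n : ℕ) : DecidablePred
    (fun c : Fin k → Fin n × Bool => Function.Injective fun i => (c i).1) :=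
  fun _ => Fintype.decidableInjectiveFintype _

instance (k n : ℕ) : Fintype (Clause k n) := Subtype.fintype _

instance (k n : ℕ) : DecidableEq (Clause k n) := Subtype.instDecidableEq

/-- The evaluation vector `σ(C) ∈ {±1}ᵏ` of a clause under the assignment `σ`:
coordinate `i` is `+1` (i.e. `true`) iff the `i`-th literal is true under `σ`. -/
def clauseEval {k n : ℕ} (σ : Fin n → Bool) (C : Clause k n) : Fin k → Bool :=
  fun i => (C.1 i).2 == σ (C.1 i).1

/-- The probability `Q_σ(C) = Q(σ(C)) / ∑_{C'} Q(σ(C'))` of the clause `C` under the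
planted distribution with planting distribution `Q` and planted assignment `σ`. -/
noncomputable def plantedProb {k n : ℕ} (Q : (Fin k → Bool) → ℝ)
    (σ : Fin n → Bool) (C : Clause k n) : ℝ :=
  Q (clauseEval σ C) / ∑ C' : Clause k n, Q (clauseEval σ C')


open Finset Real

section Bhattacharyya

variable {α : Type*} [Fintype α]

noncomputable def bhattacharyya (p q : α → ℝ) : ℝ := ∑ x, √(p x * q x)

noncomputable def sqHellinger (p q : α → ℝ) : ℝ := ∑ x, (√(p x) - √(q x)) ^ 2

lemma bhattacharyya_nonneg (p q : α → ℝ) : 0 ≤ bhattacharyya p q :=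
  sum_nonneg fun _ _ => sqrt_nonneg _

lemma sum_filter_le_bhattacharyya {p q : α → ℝ} (hp : ∀ x, 0 ≤ p x) :
    ∑ x with p x ≤ q x, p x ≤ bhattacharyya p q := by
  classical
  calc ∑ x with p x ≤ q x, p x
      ≤ ∑ x with p x ≤ q x, √(p x * q x) := sum_le_sum fun x hx => by
        conv_lhs => rw [← sqrt_mul_self (hp x)]
        exact sqrt_le_sqrt (mul_le_mul_of_nonneg_left (mem_filter.1 hx).2 (hp x))
    _ ≤ bhattacharyya p q :=
        sum_le_sum_of_subset_of_nonneg (filter_subset _ _) fun _ _ _ => sqrt_nonneg _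

lemma bhattacharyya_pi {p q : α → ℝ} (hp : ∀ x, 0 ≤ p x) (hq : ∀ x, 0 ≤ q x) (m : ℕ) :
    bhattacharyya (fun c : Fin m → α => ∏ j, p (c j)) (fun c => ∏ j, q (c j)) =
      bhattacharyya p q ^ m := by
  rw [bhattacharyya, bhattacharyya, Fintype.sum_pow]
  refine sum_congr rfl fun c _ => ?_
  rw [← prod_mul_distrib, sqrt_prod _ fun j _ => mul_nonneg (hp _) (hq _)]

lemma two_mul_bhattacharyya {p q : α → ℝ} (hp : ∀ x, 0 ≤ p x) (hq : ∀ x, 0 ≤ q x) :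
    2 * bhattacharyya p q = ∑ x, p x + ∑ x, q x - sqHellinger p q := by
  rw [bhattacharyya, sqHellinger, mul_sum, ← sum_add_distrib, ← sum_sub_distrib]
  refine sum_congr rfl fun x _ => ?_
  rw [sub_sq, sq_sqrt (hp x), sq_sqrt (hq x), sqrt_mul (hp x)]
  ring

lemma bhattacharyya_le_exp {p q : α → ℝ} (hp : ∀ x, 0 ≤ p x) (hq : ∀ x, 0 ≤ q x)
    (hp1 : ∑ x, p x = 1) (hq1 : ∑ x, q x = 1) :
    bhattacharyya p q ≤ exp (-(sqHellinger p q / 2)) := by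
  have h := two_mul_bhattacharyya hp hq
  linarith [add_one_le_exp (-(sqHellinger p q / 2))]

/-- A maximum-likelihood estimator `f` can only output a wrong `θ'` on samples `x` with
`P θ x ≤ P θ' x`. -/
lemma one_sub_sum_bhattacharyya_le_sum_filter_mem {Θ : Type*} [Fintype Θ] [DecidableEq Θ]
    {P : Θ → α → ℝ} (hP : ∀ θ x, 0 ≤ P θ x) {f : α → Θ} (hf : ∀ x θ, P θ x ≤ P (f x) x)
    {θ : Θ} (hθ : ∑ x, P θ x = 1) (good : Finset Θ) :
    1 - ∑ θ' ∈ goodᶜ, bhattacharyya (P θ) (P θ') ≤ ∑ x with f x ∈ good, P θ x := by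
  have hbad : ∑ x with f x ∉ good, P θ x ≤ ∑ θ' ∈ goodᶜ, bhattacharyya (P θ) (P θ') := by
    rw [← sum_fiberwise_of_maps_to (t := goodᶜ) fun x hx => by simpa using hx]
    refine sum_le_sum fun θ' _ => le_trans ?_ (sum_filter_le_bhattacharyya (hP θ))
    refine sum_le_sum_of_subset_of_nonneg (fun x hx => ?_) fun x _ _ => hP θ x
    simp only [mem_filter] at hx ⊢
    exact ⟨mem_univ x, hx.2 ▸ hf x θ⟩
  linarith [sum_filter_add_sum_filter_not univ (fun x => f x ∈ good) (P θ)]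

end Bhattacharyya

section Flip

variable {k : ℕ}

noncomputable def flipHellinger (Q : (Fin k → Bool) → ℝ) (T : Fin k → Bool) : ℝ :=
  sqHellinger Q fun x => Q fun i => x i ^^ T i

lemma flipHellinger_nonneg (Q : (Fin k → Bool) → ℝ) (T : Fin k → Bool) :
    0 ≤ flipHellinger Q T :=
  sum_nonneg fun _ _ => sq_nonneg _

lemma sgn_xor (a b : Bool) : sgn (a ^^ b) = sgn a * sgn (!b) := by
  cases a <;> cases b <;> norm_num [sgn]

lemma prod_sgn_not_of_odd {S : Finset (Fin k)} {T : Fin k → Bool} (hT : Odd #{i ∈ S | T i}) :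
    ∏ i ∈ S, sgn (!T i) = -1 := by
  have hflipped : ∏ i ∈ S with T i, sgn (!T i) = ∏ i ∈ S with T i, (-1 : ℝ) :=
    prod_congr rfl fun i hi => by simp [sgn, (mem_filter.1 hi).2]
  have hkept : ∏ i ∈ S with ¬T i, sgn (!T i) = 1 :=
    prod_eq_one fun i hi => by simp [sgn, (mem_filter.1 hi).2]
  rw [← prod_filter_mul_prod_filter_not S fun i => T i, hflipped, hkept, prod_const,
    hT.neg_one_pow, mul_one]

/-- The character `x ↦ ∏_{i ∈ S} xᵢ` changes sign under the flip `T`, so a flip-invariant `Q`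
is orthogonal to it. -/
lemma cubeFourierCoeff_eq_zero_of_flip_invariant {Q : (Fin k → Bool) → ℝ} {S : Finset (Fin k)}
    {T : Fin k → Bool} (hT : Odd #{i ∈ S | T i}) (hQ : ∀ x, Q (fun i => x i ^^ T i) = Q x) :
    cubeFourierCoeff Q S = 0 := by
  have hflip : Function.Involutive fun (x : Fin k → Bool) i => x i ^^ T i := fun x => by
    funext i; simp
  have h : ∑ x, Q x * ∏ i ∈ S, sgn (x i) = -∑ x, Q x * ∏ i ∈ S, sgn (x i) := by
    rw [← sum_neg_distrib]
    refine Fintype.sum_bijective _ hflip.bijective _ _ fun x => ?_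
    simp only [hQ, sgn_xor, prod_mul_distrib, prod_sgn_not_of_odd hT]
    ring
  rw [cubeFourierCoeff, show ∑ x, Q x * ∏ i ∈ S, sgn (x i) = 0 by linarith, mul_zero]

lemma flipHellinger_pos {Q : (Fin k → Bool) → ℝ} (hQ : ∀ z, 0 ≤ Q z) {S : Finset (Fin k)}
    (hS : cubeFourierCoeff Q S ≠ 0) {T : Fin k → Bool} (hT : Odd #{i ∈ S | T i}) :
    0 < flipHellinger Q T := by
  obtain ⟨x, hx⟩ : ∃ x, Q (fun i => x i ^^ T i) ≠ Q x := by
    by_contra! h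
    exact hS (cubeFourierCoeff_eq_zero_of_flip_invariant hT h)
  refine sum_pos' (fun _ _ => sq_nonneg _) ⟨x, mem_univ x, sq_pos_of_ne_zero ?_⟩
  rw [sub_ne_zero, Ne, sqrt_inj (hQ _) (hQ _)]
  exact Ne.symm hx

lemma exists_pos_le_flipHellinger {Q : (Fin k → Bool) → ℝ} (hQ : ∀ z, 0 ≤ Q z)
    {S : Finset (Fin k)} (hS : cubeFourierCoeff Q S ≠ 0) :
    ∃ δ > 0, ∀ T : Fin k → Bool, Odd #{i ∈ S | T i} → δ ≤ flipHellinger Q T := by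
  let g T := if Odd #{i ∈ S | T i} then flipHellinger Q T else 1
  have hg : ∀ T, 0 < g T := fun T => by
    by_cases hT : Odd #{i ∈ S | T i}
    · simpa [g, hT] using flipHellinger_pos hQ hS hT
    · simp [g, hT]
  obtain ⟨T₀, hT₀⟩ := Finite.exists_min g
  exact ⟨g T₀, hg T₀, fun T hT => by simpa [g, hT] using hT₀ T⟩

end Flip

namespace Clause

variable {k n : ℕ}

def ofEmbedding (σ : Fin n → Bool) (v : Fin k ↪ Fin n) (b : Fin k → Bool) : Clause k n :=
  ⟨fun i => (v i, b i == σ (v i)), fun _ _ h => v.injective (by simpa using h)⟩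

lemma clauseEval_ofEmbedding (σ s : Fin n → Bool) (v : Fin k ↪ Fin n) (b : Fin k → Bool) :
    clauseEval s (ofEmbedding σ v b) = fun i => b i ^^ (σ (v i) ^^ s (v i)) := by
  funext i
  simp only [clauseEval, ofEmbedding]
  cases b i <;> cases σ (v i) <;> cases s (v i) <;> rfl

lemma clauseEval_ofEmbedding_self (σ : Fin n → Bool) (v : Fin k ↪ Fin n) (b : Fin k → Bool) :
    clauseEval σ (ofEmbedding σ v b) = b := by
  simp [clauseEval_ofEmbedding]

def equivEmbeddingProd (σ : Fin n → Bool) : Clause k n ≃ (Fin k ↪ Fin n) × (Fin k → Bool) where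
  toFun C := (⟨fun i => (C.1 i).1, C.2⟩, clauseEval σ C)
  invFun p := ofEmbedding σ p.1 p.2
  left_inv C := Subtype.ext <| funext fun i => Prod.ext rfl <| by
    simp only [ofEmbedding, clauseEval]
    cases (C.1 i).2 <;> cases σ (C.1 i).1 <;> rfl
  right_inv p := Prod.ext (Function.Embedding.ext fun _ => rfl)
    (clauseEval_ofEmbedding_self σ p.1 p.2)

lemma sum_eq_sum_ofEmbedding (σ : Fin n → Bool) (F : Clause k n → ℝ) :
    ∑ C, F C = ∑ v : Fin k ↪ Fin n, ∑ b, F (ofEmbedding σ v b) := by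
  rw [← (equivEmbeddingProd σ).symm.sum_comp, Fintype.sum_prod_type]
  rfl

end Clause

section Planted

variable {k n : ℕ} {Q : (Fin k → Bool) → ℝ}

lemma sum_clauseEval (hQ1 : ∑ z, Q z = 1) (σ : Fin n → Bool) :
    ∑ C : Clause k n, Q (clauseEval σ C) = n.descFactorial k := by
  simp [Clause.sum_eq_sum_ofEmbedding σ, Clause.clauseEval_ofEmbedding_self, hQ1,
    Fintype.card_embedding_eq]

lemma plantedProb_eq (hQ1 : ∑ z, Q z = 1) (σ : Fin n → Bool) (C : Clause k n) :
    plantedProb Q σ C = Q (clauseEval σ C) / n.descFactorial k := by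
  rw [plantedProb, sum_clauseEval hQ1]

lemma plantedProb_nonneg (hQ0 : ∀ z, 0 ≤ Q z) (σ : Fin n → Bool) (C : Clause k n) :
    0 ≤ plantedProb Q σ C :=
  div_nonneg (hQ0 _) (sum_nonneg fun _ _ => hQ0 _)

lemma sum_plantedProb (hQ1 : ∑ z, Q z = 1) (hkn : k ≤ n) (σ : Fin n → Bool) :
    ∑ C, plantedProb Q σ C = 1 := by
  have : (n.descFactorial k : ℝ) ≠ 0 := by positivity [Nat.descFactorial_pos.2 hkn]
  simp_rw [plantedProb_eq hQ1, ← sum_div, sum_clauseEval hQ1, div_self this]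

lemma sqHellinger_plantedProb (hQ1 : ∑ z, Q z = 1) (σ s : Fin n → Bool) :
    sqHellinger (plantedProb Q σ) (plantedProb Q s) =
      (∑ v : Fin k ↪ Fin n, flipHellinger Q fun i => σ (v i) ^^ s (v i)) / n.descFactorial k := by
  simp_rw [sqHellinger, plantedProb_eq hQ1, sqrt_div' _ (Nat.cast_nonneg _), ← sub_div, div_pow,
    sq_sqrt (Nat.cast_nonneg _), ← sum_div, Clause.sum_eq_sum_ofEmbedding σ, flipHellinger,
    sqHellinger, Clause.clauseEval_ofEmbedding, Bool.xor_self, Bool.xor_false]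

end Planted

section Embeddings

variable {α β : Type*} [DecidableEq α] {P : Finset α} {D : Finset β}

def patternEmbedding (e : ({i // i ∈ P} ↪ {x // x ∈ D}) × ({i // i ∉ P} ↪ {x // x ∉ D})) :
    α ↪ β where
  toFun i := if h : i ∈ P then e.1 ⟨i, h⟩ else e.2 ⟨i, h⟩
  inj' i j hij := by
    by_cases hi : i ∈ P <;> by_cases hj : j ∈ P <;> simp only [hi, hj, dite_true, dite_false] at hij
    · simpa using e.1.injective (Subtype.ext hij)
    · exact absurd (hij ▸ (e.1 ⟨i, hi⟩).2) (e.2 ⟨j, hj⟩).2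
    · exact absurd (hij ▸ (e.2 ⟨i, hi⟩).2) (not_not.2 (e.1 ⟨j, hj⟩).2)
    · simpa using e.2.injective (Subtype.ext hij)

lemma patternEmbedding_apply
    (e : ({i // i ∈ P} ↪ {x // x ∈ D}) × ({i // i ∉ P} ↪ {x // x ∉ D})) (i : α) :
    patternEmbedding e i = if h : i ∈ P then (e.1 ⟨i, h⟩ : β) else e.2 ⟨i, h⟩ :=
  rfl

lemma patternEmbedding_mem_iff
    (e : ({i // i ∈ P} ↪ {x // x ∈ D}) × ({i // i ∉ P} ↪ {x // x ∉ D})) (i : α) :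
    patternEmbedding e i ∈ D ↔ i ∈ P := by
  by_cases hi : i ∈ P
  · simp [patternEmbedding_apply, hi]
  · simpa [patternEmbedding_apply, hi] using (e.2 ⟨i, hi⟩).2

lemma patternEmbedding_injective :
    Function.Injective (patternEmbedding (P := P) (D := D)) := by
  intro e e' h
  have h' i : patternEmbedding e i = patternEmbedding e' i := DFunLike.congr_fun h i
  refine Prod.ext (Function.Embedding.ext fun ⟨i, hi⟩ => Subtype.ext ?_)
    (Function.Embedding.ext fun ⟨i, hi⟩ => Subtype.ext ?_) <;>
  simpa [patternEmbedding_apply, hi] using h' i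

lemma descFactorial_mul_descFactorial_le_card_pattern [Fintype α] [Fintype β] [DecidableEq β] :
    (#D).descFactorial #P * (Fintype.card β - #D).descFactorial (Fintype.card α - #P) ≤
      #{v : α ↪ β | ∀ i, v i ∈ D ↔ i ∈ P} := by
  have hinj : Function.Injective fun e => (⟨patternEmbedding e, patternEmbedding_mem_iff e⟩ :
      {v : α ↪ β // ∀ i, v i ∈ D ↔ i ∈ P}) :=
    fun e e' h => patternEmbedding_injective (congrArg Subtype.val h)
  have := Fintype.card_le_of_injective _ hinj
  simpa [Fintype.card_embedding_eq, Fintype.card_subtype, filter_not, card_sdiff] using this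

end Embeddings

section OddOverlap

variable {k n : ℕ}

lemma pow_le_four_pow_mul_descFactorial {a n t : ℕ} (h : n ≤ 4 * (a + 1 - t)) :
    n ^ t ≤ 4 ^ t * a.descFactorial t :=
  calc n ^ t ≤ (4 * (a + 1 - t)) ^ t := Nat.pow_le_pow_left h t
    _ = 4 ^ t * (a + 1 - t) ^ t := mul_pow ..
    _ ≤ 4 ^ t * a.descFactorial t := Nat.mul_le_mul_left _ (Nat.pow_sub_le_descFactorial a t)

lemma descFactorial_mul_descFactorial_le_card_odd {S P : Finset (Fin k)}
    (hP : Odd #{i ∈ S | i ∈ P}) (D : Finset (Fin n)) :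
    (#D).descFactorial #P * (n - #D).descFactorial (k - #P) ≤
      #{v : Fin k ↪ Fin n | Odd #{i ∈ S | v i ∈ D}} := by
  have h := descFactorial_mul_descFactorial_le_card_pattern (P := P) (D := D)
  rw [Fintype.card_fin, Fintype.card_fin] at h
  refine h.trans (card_le_card fun v hv => ?_)
  simp only [mem_filter, mem_univ, true_and] at hv ⊢
  rwa [filter_congr fun i _ => hv i]

/-- According as `#D ≤ n / 2`, `#S` is even, or `#S` is odd, the embeddings sending exactly
`i₀`, all but `i₀`, or everything into `D` have odd overlap with `S`. -/
lemma min_mul_pow_le_card_odd {S : Finset (Fin k)} (hS : S.Nonempty) (hn : 4 * k ≤ n)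
    (D : Finset (Fin n)) :
    min #D (n - #D) * n ^ (k - 1) ≤
      4 ^ (k - 1) * #{v : Fin k ↪ Fin n | Odd #{i ∈ S | v i ∈ D}} := by
  obtain ⟨i₀, hi₀⟩ := hS
  obtain ⟨k, rfl⟩ : ∃ k', k = k' + 1 := Nat.exists_eq_add_one.2 i₀.pos
  have hD : #D ≤ n := by simpa using card_le_univ D
  simp only [Nat.add_sub_cancel]
  by_cases hsmall : 2 * #D ≤ n
  · have h := descFactorial_mul_descFactorial_le_card_odd (S := S) (P := {i₀})
      (by simp [filter_eq', hi₀]) D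
    have hpow := pow_le_four_pow_mul_descFactorial (a := n - #D) (n := n) (t := k) (by omega)
    simp only [card_singleton, Nat.descFactorial_one, Nat.add_sub_cancel] at h
    rw [min_eq_left (by omega)]
    nlinarith [Nat.mul_le_mul_left #D hpow, Nat.mul_le_mul_left (4 ^ k) h]
  rw [min_eq_right (by omega)]
  rcases Nat.even_or_odd #S with heven | hodd
  · have hP : Odd #{i ∈ S | i ∈ univ.erase i₀} := by
      rw [filter_mem_eq_inter, inter_erase, inter_univ, card_erase_of_mem hi₀]
      exact Nat.Even.sub_odd (card_pos.2 ⟨i₀, hi₀⟩) heven odd_one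
    have h := descFactorial_mul_descFactorial_le_card_odd hP D
    have hpow := pow_le_four_pow_mul_descFactorial (a := #D) (n := n) (t := k) (by omega)
    simp only [card_erase_of_mem (mem_univ i₀), card_univ, Fintype.card_fin,
      Nat.add_sub_cancel, Nat.add_sub_cancel_left, Nat.descFactorial_one] at h
    nlinarith [Nat.mul_le_mul_left (n - #D) hpow, Nat.mul_le_mul_left (4 ^ k) h]
  · have h := descFactorial_mul_descFactorial_le_card_odd (S := S) (P := univ)
      (by simpa using hodd) D
    obtain ⟨d, hd⟩ : ∃ d, #D = d + 1 := Nat.exists_eq_add_one.2 (by omega)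
    have hpow := pow_le_four_pow_mul_descFactorial (a := d) (n := n) (t := k) (by omega)
    simp only [card_univ, Fintype.card_fin, Nat.sub_self, Nat.descFactorial_zero, mul_one, hd,
      Nat.succ_descFactorial_succ] at h
    rw [hd]
    nlinarith [Nat.mul_le_mul (show n - (d + 1) ≤ d + 1 by omega) hpow,
      Nat.mul_le_mul_left (4 ^ k) h]

end OddOverlap

section Hamming

variable {ι : Type*} [Fintype ι]

lemma hammingDist_not_left (σ s : ι → Bool) :
    hammingDist (fun i => !σ i) s = Fintype.card ι - hammingDist σ s := by
  have h := card_filter_add_card_filter_not (s := univ) fun i => σ i ≠ s i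
  simp only [not_not, card_univ] at h
  have heq : hammingDist (fun i => !σ i) s = #{i | σ i = s i} := by
    unfold hammingDist
    congr 1; ext i; cases σ i <;> cases s i <;> simp
  rw [heq, hammingDist]
  omega

lemma sum_pow_hammingDist [DecidableEq ι] (σ : ι → Bool) (q : ℝ) :
    ∑ s, q ^ hammingDist σ s = (1 + q) ^ Fintype.card ι := by
  have h s : q ^ hammingDist σ s = ∏ i, if σ i ≠ s i then q else 1 := by
    rw [← prod_filter, prod_const]; rfl
  have hb i : ∑ b, (if σ i ≠ b then q else 1) = 1 + q := by
    cases σ i <;> simp [add_comm]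
  simp_rw [h]
  rw [← Fintype.prod_sum (fun i b => if σ i ≠ b then q else 1), prod_congr rfl fun i _ => hb i,
    prod_const, card_univ]

lemma sum_compl_singleton_pow_hammingDist [DecidableEq ι] (σ : ι → Bool) (q : ℝ) :
    ∑ s ∈ {σ}ᶜ, q ^ hammingDist σ s = (1 + q) ^ Fintype.card ι - 1 := by
  rw [← sum_pow_hammingDist σ q, Fintype.sum_eq_add_sum_compl σ, hammingDist_self, pow_zero,
    add_sub_cancel_left]

lemma sum_pow_min_hammingDist_le [DecidableEq ι] {σ : ι → Bool} {q : ℝ} (hq : 0 ≤ q) :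
    ∑ s ∈ {σ, fun i => !σ i}ᶜ, q ^ min (hammingDist σ s) (hammingDist (fun i => !σ i) s) ≤
      2 * ((1 + q) ^ Fintype.card ι - 1) := by
  have hmin a b : q ^ min a b ≤ q ^ a + q ^ b := by
    rcases min_choice a b with h | h <;> rw [h] <;> linarith [pow_nonneg hq a, pow_nonneg hq b]
  have hle (τ : ι → Bool) (hτ : τ ∈ ({σ, fun i => !σ i} : Finset _)) :
      ∑ s ∈ {σ, fun i => !σ i}ᶜ, q ^ hammingDist τ s ≤ ∑ s ∈ {τ}ᶜ, q ^ hammingDist τ s :=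
    sum_le_sum_of_subset_of_nonneg (compl_subset_compl.2 (singleton_subset_iff.2 hτ))
      fun _ _ _ => pow_nonneg hq _
  calc _ ≤ ∑ s ∈ {σ, fun i => !σ i}ᶜ, (q ^ hammingDist σ s + q ^ hammingDist (fun i => !σ i) s) :=
        sum_le_sum fun s _ => hmin _ _
    _ ≤ ∑ s ∈ {σ}ᶜ, q ^ hammingDist σ s +
          ∑ s ∈ {fun i => !σ i}ᶜ, q ^ hammingDist (fun i => !σ i) s := by
        rw [sum_add_distrib]
        exact add_le_add (hle _ (by simp)) (hle _ (by simp))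
    _ = _ := by rw [sum_compl_singleton_pow_hammingDist, sum_compl_singleton_pow_hammingDist]; ring

end Hamming

section Recovery

variable {k n : ℕ} {Q : (Fin k → Bool) → ℝ} {S : Finset (Fin k)} {δ : ℝ}

lemma sqHellinger_plantedProb_ge (hQ1 : ∑ z, Q z = 1) (hS : S.Nonempty) (hδ0 : 0 ≤ δ)
    (hδ : ∀ T : Fin k → Bool, Odd #{i ∈ S | T i} → δ ≤ flipHellinger Q T) (hn : 4 * k ≤ n)
    (σ s : Fin n → Bool) :
    δ / 4 ^ (k - 1) * min (hammingDist σ s) (hammingDist (fun i => !σ i) s) / n ≤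
      sqHellinger (plantedProb Q σ) (plantedProb Q s) := by
  set D : Finset (Fin n) := {x | σ x ≠ s x}
  have hD' : n - #D = hammingDist (fun i => !σ i) s := by
    rw [hammingDist_not_left, Fintype.card_fin]; rfl
  set N := #{v : Fin k ↪ Fin n | Odd #{i ∈ S | v i ∈ D}}
  set W := ∑ v : Fin k ↪ Fin n, flipHellinger Q fun i => σ (v i) ^^ s (v i)
  have hcount : (min #D (n - #D) * n ^ (k - 1) : ℝ) ≤ 4 ^ (k - 1) * N := by
    exact_mod_cast min_mul_pow_le_card_odd hS hn D
  have hW : δ * N ≤ W := by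
    calc δ * N = N • δ := by rw [nsmul_eq_mul, mul_comm]
      _ ≤ ∑ v ∈ {v : Fin k ↪ Fin n | Odd #{i ∈ S | v i ∈ D}}, flipHellinger Q
          fun i => σ (v i) ^^ s (v i) := card_nsmul_le_sum _ _ _ fun v hv => hδ _ (by
            simpa [D] using (mem_filter.1 hv).2)
      _ ≤ W := sum_le_sum_of_subset_of_nonneg (filter_subset _ _)
          fun _ _ _ => flipHellinger_nonneg _ _
  have hk : 0 < k := hS.elim fun i _ => i.pos
  have hnpos : (0 : ℝ) < n := by exact_mod_cast (by omega : 0 < n)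
  have hA : (0 : ℝ) < n.descFactorial k := by exact_mod_cast Nat.descFactorial_pos.2 (by omega)
  have hAle : (n.descFactorial k : ℝ) ≤ n ^ (k - 1) * n := by
    rw [← pow_succ, Nat.sub_add_cancel hk]
    exact_mod_cast Nat.descFactorial_le_pow n k
  rw [sqHellinger_plantedProb hQ1, ← hD']
  calc δ / 4 ^ (k - 1) * (min #D (n - #D) : ℕ) / n
      = δ * (min #D (n - #D) * n ^ (k - 1) : ℝ) / (4 ^ (k - 1) * (n ^ (k - 1) * n)) := by
        push_cast; field_simp
    _ ≤ δ * (4 ^ (k - 1) * N) / (4 ^ (k - 1) * (n ^ (k - 1) * n)) := by gcongr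
    _ = δ * N / (n ^ (k - 1) * n) := by field_simp
    _ ≤ W / (n ^ (k - 1) * n) := by gcongr
    _ ≤ W / n.descFactorial k :=
        div_le_div_of_nonneg_left (sum_nonneg fun _ _ => flipHellinger_nonneg _ _) hA hAle


lemma bhattacharyya_plantedProb_le (hQ0 : ∀ z, 0 ≤ Q z) (hQ1 : ∑ z, Q z = 1) (hS : S.Nonempty)
    (hδ0 : 0 ≤ δ) (hδ : ∀ T : Fin k → Bool, Odd #{i ∈ S | T i} → δ ≤ flipHellinger Q T)
    (hn : 4 * k ≤ n) (σ s : Fin n → Bool) :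
    bhattacharyya (plantedProb Q σ) (plantedProb Q s) ≤
      exp (-(δ / (2 * 4 ^ (k - 1)) *
        min (hammingDist σ s) (hammingDist (fun i => !σ i) s) / n)) := by
  refine (bhattacharyya_le_exp (plantedProb_nonneg hQ0 σ) (plantedProb_nonneg hQ0 s)
    (sum_plantedProb hQ1 (by omega) σ) (sum_plantedProb hQ1 (by omega) s)).trans ?_
  rw [exp_le_exp, neg_le_neg_iff]
  refine Eq.trans_le ?_ (div_le_div_of_nonneg_right
    (sqHellinger_plantedProb_ge hQ1 hS hδ0 hδ hn σ s) zero_le_two)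
  ring

lemma one_sub_le_sum_maxLikelihood_success (hQ0 : ∀ z, 0 ≤ Q z) (hQ1 : ∑ z, Q z = 1)
    (hS : S.Nonempty) (hδ0 : 0 ≤ δ)
    (hδ : ∀ T : Fin k → Bool, Odd #{i ∈ S | T i} → δ ≤ flipHellinger Q T) (hn : 4 * k ≤ n)
    {m : ℕ} {f : (Fin m → Clause k n) → (Fin n → Bool)}
    (hf : ∀ (c : Fin m → Clause k n) t, ∏ j, plantedProb Q t (c j) ≤ ∏ j, plantedProb Q (f c) (c j))
    (σ : Fin n → Bool) :
    1 - 2 * ((1 + exp (-(δ / (2 * 4 ^ (k - 1)) * m / n))) ^ n - 1) ≤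
      ∑ c with f c = σ ∨ f c = fun i => !σ i, ∏ j, plantedProb Q σ (c j) := by
  set β := δ / (2 * 4 ^ (k - 1)) with hβ
  have hP : ∀ t (c : Fin m → Clause k n), 0 ≤ ∏ j : Fin m, plantedProb Q t (c j) :=
    fun t c => prod_nonneg fun j _ => plantedProb_nonneg hQ0 t (c j)
  have hP1 : ∑ c : Fin m → Clause k n, ∏ j, plantedProb Q σ (c j) = 1 := by
    rw [← Fintype.sum_pow, sum_plantedProb hQ1 (by omega), one_pow]
  have hML := one_sub_sum_bhattacharyya_le_sum_filter_mem hP hf hP1 {σ, fun i => !σ i}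
  simp only [mem_insert, mem_singleton] at hML
  refine le_trans (sub_le_sub_left ?_ 1) hML
  calc _ = ∑ s ∈ {σ, fun i => !σ i}ᶜ, bhattacharyya (plantedProb Q σ) (plantedProb Q s) ^ m :=
        sum_congr rfl fun s _ =>
          bhattacharyya_pi (plantedProb_nonneg hQ0 σ) (plantedProb_nonneg hQ0 s) m
    _ ≤ ∑ s ∈ {σ, fun i => !σ i}ᶜ, exp (-(β * m / n)) ^
          min (hammingDist σ s) (hammingDist (fun i => !σ i) s) := by
        refine sum_le_sum fun s _ => (pow_le_pow_left₀ (bhattacharyya_nonneg _ _)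
          (bhattacharyya_plantedProb_le hQ0 hQ1 hS hδ0 hδ hn σ s) m).trans_eq ?_
        rw [← exp_nat_mul, ← exp_nat_mul, hβ]
        ring_nf
    _ ≤ _ := by
        simpa using sum_pow_min_hammingDist_le (σ := σ) (exp_pos (-(β * m / n))).le

end Recovery

lemma two_mul_one_add_pow_sub_one_le {n : ℕ} {q : ℝ} (hq : 0 ≤ q) (hnq : n * q ≤ 1) :
    2 * ((1 + q) ^ n - 1) ≤ 4 * (n * q) := by
  have hexp : (1 + q) ^ n ≤ exp (n * q) := by
    rw [exp_nat_mul]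
    exact pow_le_pow_left₀ (by linarith) (by linarith [add_one_le_exp q]) n
  have habs := abs_exp_sub_one_le (x := n * q) (by rwa [abs_of_nonneg (by positivity)])
  rw [abs_of_nonneg (by positivity : (0 : ℝ) ≤ n * q)] at habs
  linarith [le_abs_self (exp (n * q) - 1)]

lemma exp_neg_div_le_inv_sq {n : ℕ} {x : ℝ} (hn : 0 < n) (h : 2 * n * log n ≤ x) :
    exp (-(x / n)) ≤ ((n : ℝ) ^ 2)⁻¹ := by
  have hn' : (0 : ℝ) < n := by exact_mod_cast hn
  calc exp (-(x / n)) ≤ exp (-log ((n : ℝ) ^ 2)) := by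
        gcongr
        rw [log_pow, le_div_iff₀ hn']
        push_cast; linarith
    _ = ((n : ℝ) ^ 2)⁻¹ := by rw [exp_neg, exp_log (by positivity)]

lemma two_mul_one_add_exp_pow_sub_one_lt {n : ℕ} {x ε : ℝ} (hε : 0 < ε) (hn : 4 / ε < n)
    (hx : 2 * n * log n ≤ x) :
    2 * ((1 + exp (-(x / n))) ^ n - 1) < ε := by
  have hn0 : (0 : ℝ) < n := (div_pos four_pos hε).trans hn
  have hn1 : (1 : ℝ) ≤ n := Nat.one_le_cast.2 (by exact_mod_cast hn0)
  have hnq : n * exp (-(x / n)) ≤ 1 / n :=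
    calc _ ≤ n * ((n : ℝ) ^ 2)⁻¹ := by
          gcongr; exact exp_neg_div_le_inv_sq (by exact_mod_cast hn0) hx
      _ = 1 / n := by field_simp
  have h4 : 4 * (1 / (n : ℝ)) < ε := by
    rw [mul_one_div, div_lt_iff₀ hn0, mul_comm]; rwa [div_lt_iff₀ hε] at hn
  linarith [two_mul_one_add_pow_sub_one_le (exp_pos _).le (hnq.trans ((div_le_one hn0).2 hn1))]

theorem planted_csp_recovery_general (k : ℕ)
    (Q : (Fin k → Bool) → ℝ) (hQ01 : ∀ z, Q z ∈ Set.Icc (0:ℝ) 1) (hQ1 : ∑ z, Q z = 1)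
    (r : ℕ) (hr : 2 ≤ r)
    (hcomplexAt : ∃ S : Finset (Fin k), S.Nonempty ∧ S.card = r ∧ cubeFourierCoeff Q S ≠ 0) :
    ∃ C : ℝ, 0 < C ∧
      ∀ ε : ℝ, 0 < ε →
        ∃ N : ℕ, ∀ n : ℕ, N ≤ n → ∀ m : ℕ,
          C * (n : ℝ) ^ ((r : ℝ) / 2) * Real.log n ≤ (m : ℝ) →
          ∃ f : (Fin m → Clause k n) → (Fin n → Bool),
            ∀ σ : Fin n → Bool,
              1 - ε ≤
                ∑ c ∈ Finset.univ.filter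
                    (fun c : Fin m → Clause k n =>
                      f c = σ ∨ f c = fun i => !(σ i)),
                  ∏ j : Fin m, plantedProb Q σ (c j) := by
  obtain ⟨S, hS, -, hQS⟩ := hcomplexAt
  have hQ0 z : 0 ≤ Q z := (hQ01 z).1
  obtain ⟨δ, hδ0, hδ⟩ := exists_pos_le_flipHellinger hQ0 hQS
  set β := δ / (2 * 4 ^ (k - 1)) with hβ
  have hβ0 : 0 < β := by positivity
  refine ⟨2 / β, by positivity, fun ε hε => ?_⟩
  obtain ⟨N, hN⟩ := exists_nat_gt (4 / ε)
  refine ⟨max (4 * k) N, fun n hn m hm => ?_⟩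
  have hεn : 4 / ε < n := hN.trans_le (by exact_mod_cast le_of_max_le_right hn)
  have hn1 : (1 : ℝ) ≤ n :=
    Nat.one_le_cast.2 (by exact_mod_cast (div_pos four_pos hε).trans hεn)
  have hβm : 2 * n * log n ≤ β * m := by
    have hnr : (n : ℝ) ≤ (n : ℝ) ^ ((r : ℝ) / 2) := by
      simpa using rpow_le_rpow_of_exponent_le hn1
        (show (1 : ℝ) ≤ r / 2 by rw [le_div_iff₀ two_pos]; exact_mod_cast hr)
    calc 2 * n * log n = β * (2 / β * n * log n) := by field_simp
      _ ≤ β * m := by gcongr; exact le_trans (by gcongr) hm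
  choose f hf using fun c : Fin m → Clause k n =>
    Finite.exists_max fun t => ∏ j, plantedProb Q t (c j)
  refine ⟨f, fun σ => ?_⟩
  have hsuccess :=
    one_sub_le_sum_maxLikelihood_success hQ0 hQ1 hS hδ0.le hδ (le_of_max_le_left hn) hf σ
  rw [← hβ] at hsuccess
  linarith [two_mul_one_add_exp_pow_sub_one_lt hε hεn hβm]

/-- For every planting distribution `Q` of distribution complexity `r ≥ 2` there is a
constant `C > 0` such that for all large enough `n` and `m ≥ C·n^{r/2}·log n` there is an
estimator that, given `m` i.i.d. clauses from `Q_σ`, recovers `σ` up to sign with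
probability at least `1 - ε`.  (Assignments and evaluations are encoded over `Bool`, with
`true ↦ +1`, `false ↦ -1`; the negated assignment `-σ` is the pointwise boolean negation.
The success probability of the estimator `f` is written as the finite sum, over all
`m`-tuples of clauses `c` on which `f` succeeds, of the product of the clause
probabilities `Q_σ(c j)`.) -/
theorem planted_csp_recovery (k : ℕ) (hk : 2 ≤ k)
    (Q : (Fin k → Bool) → ℝ) (hQ01 : ∀ z, Q z ∈ Set.Icc (0:ℝ) 1) (hQ1 : ∑ z, Q z = 1)
    (r : ℕ) (hr : 2 ≤ r)
    (hcomplexAt : ∃ S : Finset (Fin k), S.Nonempty ∧ S.card = r ∧ cubeFourierCoeff Q S ≠ 0)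
    (hcomplexMin : ∀ S : Finset (Fin k), S.Nonempty → S.card < r → cubeFourierCoeff Q S = 0) :
    ∃ C : ℝ, 0 < C ∧
      ∀ ε : ℝ, 0 < ε →
        ∃ N : ℕ, ∀ n : ℕ, N ≤ n → ∀ m : ℕ,
          C * (n : ℝ) ^ ((r : ℝ) / 2) * Real.log n ≤ (m : ℝ) →
          ∃ f : (Fin m → Clause k n) → (Fin n → Bool),
            ∀ σ : Fin n → Bool,
              1 - ε ≤
                ∑ c ∈ Finset.univ.filter
                    (fun c : Fin m → Clause k n =>
                      f c = σ ∨ f c = fun i => !(σ i)),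
                  ∏ j : Fin m, plantedProb Q σ (c j) :=
  planted_csp_recovery_general k Q hQ01 hQ1 r hr hcomplexAt
end

section
/- Let k ≥ 1 and let Q : {−1,1}^k → ℝ be nonnegative with ∑_{x ∈ {−1,1}^k} Q(x) = 1. Let S ⊆ {1,…,k} be nonempty and suppose that Q̂(T) = 0 for every nonempty proper subset T of S. Then for every z : S → {−1,1}, the marginal probability satisfies ∑_{x ∈ {−1,1}^k : x restricted to S equals z} Q(x) = 2^{−|S|} · (1 + 2^k · Q̂(S) · ∏_{i ∈ S} z_i). In particular, setting δ = 1 + 2^k · Q̂(S), this marginal equals δ·2^{−|S|} when ∏_{i ∈ S} z_i = 1 and (2−δ)·2^{−|S|} when ∏_{i ∈ S} z_i = −1. -/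
/-!
Expanding the indicator of `{x : x|_S = z}` as `2^{-|S|} ∏_{i ∈ S} (1 + xᵢ zᵢ)` writes the marginal
as `2^{-|S|} ∑_{T ⊆ S} 2ᵏ Q̂(T) ∏_{i ∈ T} zᵢ`. When the coefficients of the nonempty proper subsets
vanish, only `T = ∅`, contributing the total mass `1`, and `T = S` survive.
-/

open Finset

lemma sgn_mul_sgn_add_one (a b : Bool) : sgn a * sgn b + 1 = if a = b then 2 else 0 := by
  cases a <;> cases b <;> norm_num [sgn]

lemma sum_powerset_prod_sgn_mul_sgn {ι : Type*} (S : Finset ι) (x z : ι → Bool) :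
    ∑ T ∈ S.powerset, ∏ i ∈ T, sgn (x i) * sgn (z i) =
      if ∀ i ∈ S, x i = z i then (2 : ℝ) ^ #S else 0 := by
  rw [← prod_add_one]
  simp_rw [sgn_mul_sgn_add_one]
  split_ifs with hxz
  · rw [prod_congr rfl fun i hi => if_pos (hxz i hi), prod_const]
  · obtain ⟨i, hi, hne⟩ := not_forall₂.mp hxz
    exact prod_eq_zero hi (if_neg hne)

section Cube

variable {k : ℕ} (Q : (Fin k → Bool) → ℝ)

def cubeMarginal (S : Finset (Fin k)) (z : Fin k → Bool) : ℝ :=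
  ∑ x ∈ univ.filter (fun x : Fin k → Bool => ∀ i ∈ S, x i = z i), Q x

lemma two_pow_mul_cubeFourierCoeff (T : Finset (Fin k)) :
    2 ^ k * cubeFourierCoeff Q T = ∑ x, Q x * ∏ i ∈ T, sgn (x i) := by
  rw [cubeFourierCoeff, mul_inv_cancel_left₀ (by positivity)]

lemma two_pow_mul_cubeFourierCoeff_empty : 2 ^ k * cubeFourierCoeff Q ∅ = ∑ x, Q x := by
  simp [two_pow_mul_cubeFourierCoeff]

lemma two_pow_card_mul_cubeMarginal (S : Finset (Fin k)) (z : Fin k → Bool) :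
    2 ^ #S * cubeMarginal Q S z =
      ∑ T ∈ S.powerset, 2 ^ k * cubeFourierCoeff Q T * ∏ i ∈ T, sgn (z i) := by
  calc 2 ^ #S * cubeMarginal Q S z
      = ∑ x, Q x * ∑ T ∈ S.powerset, ∏ i ∈ T, sgn (x i) * sgn (z i) := by
        simp_rw [cubeMarginal, sum_powerset_prod_sgn_mul_sgn, mul_ite, mul_zero,
          ← sum_filter, mul_sum, mul_comm]
    _ = ∑ T ∈ S.powerset, ∑ x, Q x * (∏ i ∈ T, sgn (x i)) * ∏ i ∈ T, sgn (z i) := by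
        simp_rw [mul_sum, prod_mul_distrib, mul_assoc]
        exact sum_comm
    _ = _ := by simp_rw [← sum_mul, two_pow_mul_cubeFourierCoeff]

lemma cubeMarginal_of_cubeFourierCoeff_eq_zero {S : Finset (Fin k)} (hS : S.Nonempty)
    (hvan : ∀ T : Finset (Fin k), T.Nonempty → T ⊂ S → cubeFourierCoeff Q T = 0)
    (z : Fin k → Bool) :
    cubeMarginal Q S z =
      ((2 : ℝ) ^ #S)⁻¹ * (∑ x, Q x + 2 ^ k * cubeFourierCoeff Q S * ∏ i ∈ S, sgn (z i)) := by
  rw [eq_inv_mul_iff_mul_eq₀ (by positivity), two_pow_card_mul_cubeMarginal,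
    sum_eq_add_of_mem ∅ S (empty_mem_powerset S) (mem_powerset_self S) hS.ne_empty.symm,
    two_pow_mul_cubeFourierCoeff_empty, prod_empty, mul_one]
  rintro T hT ⟨hT_ne_empty, hT_ne_S⟩
  rw [hvan T (nonempty_iff_ne_empty.mpr hT_ne_empty)
    (ssubset_of_subset_of_ne (mem_powerset.mp hT) hT_ne_S), mul_zero, zero_mul]

end Cube

theorem marginal_of_fourier_vanishing_proper_general {k : ℕ}
    (Q : (Fin k → Bool) → ℝ) (hQ1 : ∑ x, Q x = 1)
    (S : Finset (Fin k)) (hS : S.Nonempty)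
    (hvan : ∀ T : Finset (Fin k), T.Nonempty → T ⊂ S → cubeFourierCoeff Q T = 0) :
    ∀ z : Fin k → Bool,
      (∑ x ∈ Finset.univ.filter (fun x : Fin k → Bool => ∀ i ∈ S, x i = z i), Q x) =
        ((2 : ℝ) ^ S.card)⁻¹ * (1 + 2 ^ k * cubeFourierCoeff Q S * ∏ i ∈ S, sgn (z i)) ∧
      ((∏ i ∈ S, sgn (z i)) = 1 →
        (∑ x ∈ Finset.univ.filter (fun x : Fin k → Bool => ∀ i ∈ S, x i = z i), Q x) =
          (1 + 2 ^ k * cubeFourierCoeff Q S) * ((2 : ℝ) ^ S.card)⁻¹) ∧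
      ((∏ i ∈ S, sgn (z i)) = -1 →
        (∑ x ∈ Finset.univ.filter (fun x : Fin k → Bool => ∀ i ∈ S, x i = z i), Q x) =
          (2 - (1 + 2 ^ k * cubeFourierCoeff Q S)) * ((2 : ℝ) ^ S.card)⁻¹) := by
  intro z
  have key := cubeMarginal_of_cubeFourierCoeff_eq_zero Q hS hvan z
  rw [cubeMarginal, hQ1] at key
  exact ⟨key, fun hz => by rw [key, hz]; ring, fun hz => by rw [key, hz]; ring⟩

/-- If all Fourier coefficients of `Q` on nonempty proper subsets of `S` vanish, then the
marginal of `Q` on the coordinates in `S` is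
`2^{-|S|}·(1 + 2ᵏ·Q̂(S)·∏_{i∈S} zᵢ)`; in particular, with `δ = 1 + 2ᵏ·Q̂(S)`, it equals
`δ·2^{-|S|}` when `∏_{i∈S} zᵢ = 1` and `(2-δ)·2^{-|S|}` when `∏_{i∈S} zᵢ = -1`. -/
theorem marginal_of_fourier_vanishing_proper {k : ℕ} (hk : 1 ≤ k)
    (Q : (Fin k → Bool) → ℝ) (hQ0 : ∀ x, 0 ≤ Q x) (hQ1 : ∑ x, Q x = 1)
    (S : Finset (Fin k)) (hS : S.Nonempty)
    (hvan : ∀ T : Finset (Fin k), T.Nonempty → T ⊂ S → cubeFourierCoeff Q T = 0) :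
    ∀ z : Fin k → Bool,
      (∑ x ∈ Finset.univ.filter (fun x : Fin k → Bool => ∀ i ∈ S, x i = z i), Q x) =
        ((2 : ℝ) ^ S.card)⁻¹ * (1 + 2 ^ k * cubeFourierCoeff Q S * ∏ i ∈ S, sgn (z i)) ∧
      ((∏ i ∈ S, sgn (z i)) = 1 →
        (∑ x ∈ Finset.univ.filter (fun x : Fin k → Bool => ∀ i ∈ S, x i = z i), Q x) =
          (1 + 2 ^ k * cubeFourierCoeff Q S) * ((2 : ℝ) ^ S.card)⁻¹) ∧
      ((∏ i ∈ S, sgn (z i)) = -1 →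
        (∑ x ∈ Finset.univ.filter (fun x : Fin k → Bool => ∀ i ∈ S, x i = z i), Q x) =
          (2 - (1 + 2 ^ k * cubeFourierCoeff Q S)) * ((2 : ℝ) ^ S.card)⁻¹) :=
  marginal_of_fourier_vanishing_proper_general Q hQ1 S hS hvan
end

section
/- Let M be the centered block random matrix M(n₁,n₂,u,v,δ,q), and suppose n₁ is even and u is balanced (exactly n₁/2 coordinates of u equal +1). Then for every y ∈ ℝ^{n₂}, E[ ‖M y‖₂² ] = ‖y‖₂² · ( n₁ q − (n₁ q²/2)·(δ² + (2−δ)²) ) + (δ−1)² · q² · n₁ · (v · y)². -/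
open MeasureTheory ProbabilityTheory Matrix

/-!
Each coordinate `(M y)ᵢ = ∑ⱼ Mᵢⱼ yⱼ` is a sum of independent two-point variables, so its second
moment is `∑ⱼ Var(Mᵢⱼ) yⱼ² + (∑ⱼ E[Mᵢⱼ] yⱼ)²`. An entry equal to `1 - q` with probability `p`
(and to `-q` otherwise) has mean `p - q` and variance `p (1 - p)`. Here `p - q = (δ - 1) q uᵢ vⱼ`,
so the mean term is `(δ - 1)² q² (v ⬝ y)²` in every row. Because `u` is balanced, each column has
`p = δq` in half of its entries and `p = (2 - δ)q` in the other half, and the variances summed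
over a column give the coefficient `n₁/2 · (δq (1 - δq) + (2 - δ)q (1 - (2 - δ)q))` of `‖y‖²`.
-/

/-- The centered block random matrix model `M(n₁,n₂,u,v,δ,q)`: the random matrix `M`
on the probability space `(Ω, μ)` has mutually independent entries, where entry `M i j`
equals `1 - q` with probability `δ*q` (when `u i * v j = 1`), resp. `(2-δ)*q`
(when `u i * v j = -1`), and equals `-q` otherwise. -/
structure IsCenteredBlockMatrix {n₁ n₂ : ℕ} (u : Fin n₁ → ℝ) (v : Fin n₂ → ℝ)
    (δ q : ℝ) {Ω : Type*} [MeasurableSpace Ω] (μ : Measure Ω)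
    (M : Ω → Matrix (Fin n₁) (Fin n₂) ℝ) : Prop where
  meas : ∀ i j, Measurable fun ω => M ω i j
  indep : iIndepFun
    (fun (p : Fin n₁ × Fin n₂) ω => M ω p.1 p.2) μ
  prob_hi : ∀ i j, μ {ω | M ω i j = 1 - q} =
    ENNReal.ofReal (if u i * v j = 1 then δ * q else (2 - δ) * q)
  prob_lo : ∀ i j, μ {ω | M ω i j = -q} =
    1 - ENNReal.ofReal (if u i * v j = 1 then δ * q else (2 - δ) * q)

section TwoPoint

variable {Ω : Type*} [MeasurableSpace Ω] {μ : Measure Ω} [IsProbabilityMeasure μ]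
  {f : Ω → ℝ} {a b p : ℝ}

lemma ae_eq_or_eq_of_measure_eq (hf : Measurable f) (hab : a ≠ b)
    (ha : μ {ω | f ω = a} = ENNReal.ofReal p) (hb : μ {ω | f ω = b} = 1 - ENNReal.ofReal p) :
    ∀ᵐ ω ∂μ, f ω = a ∨ f ω = b := by
  have hdisj : Disjoint {ω | f ω = a} {ω | f ω = b} :=
    Set.disjoint_left.2 fun _ h₁ h₂ => hab (h₁.symm.trans h₂)
  have hunion : μ ({ω | f ω = a} ∪ {ω | f ω = b}) = 1 := by
    rw [measure_union hdisj (hf (measurableSet_singleton b)), ha, hb,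
      add_tsub_cancel_of_le (ha ▸ prob_le_one)]
  exact (mem_ae_iff_prob_eq_one
    ((hf (measurableSet_singleton a)).union (hf (measurableSet_singleton b)))).2 hunion

lemma memLp_of_measure_eq (hf : Measurable f) (hab : a ≠ b)
    (ha : μ {ω | f ω = a} = ENNReal.ofReal p) (hb : μ {ω | f ω = b} = 1 - ENNReal.ofReal p)
    (r : ENNReal) : MemLp f r μ := by
  refine MemLp.of_bound hf.aestronglyMeasurable (max |a| |b|) ?_
  filter_upwards [ae_eq_or_eq_of_measure_eq hf hab ha hb] with ω hω
  rcases hω with h | h <;> simp [h]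

lemma integral_comp_of_measure_eq (hf : Measurable f) (hab : a ≠ b) (hp : 0 ≤ p)
    (ha : μ {ω | f ω = a} = ENNReal.ofReal p) (hb : μ {ω | f ω = b} = 1 - ENNReal.ofReal p)
    (φ : ℝ → ℝ) :
    ∫ ω, φ (f ω) ∂μ = φ a * p + φ b * (1 - p) := by
  have hA : MeasurableSet {ω | f ω = a} := hf (measurableSet_singleton a)
  have heq : (fun ω => φ (f ω)) =ᵐ[μ]
      fun ω => {ω | f ω = a}.indicator (fun _ => φ a - φ b) ω + φ b := by
    filter_upwards [ae_eq_or_eq_of_measure_eq hf hab ha hb] with ω hω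
    rcases hω with h | h
    · simp [h]
    · have : ω ∉ {ω | f ω = a} := fun h' => hab (h'.symm.trans h)
      simp [h, this]
  rw [integral_congr_ae heq, integral_add ((integrable_const _).indicator hA) (integrable_const _),
    integral_indicator_const _ hA, integral_const, measureReal_def, ha, ENNReal.toReal_ofReal hp]
  simp only [smul_eq_mul, probReal_univ, one_mul]
  ring

lemma integral_of_measure_eq (hf : Measurable f) (hab : a ≠ b) (hp : 0 ≤ p)
    (ha : μ {ω | f ω = a} = ENNReal.ofReal p) (hb : μ {ω | f ω = b} = 1 - ENNReal.ofReal p) :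
    ∫ ω, f ω ∂μ = a * p + b * (1 - p) :=
  integral_comp_of_measure_eq hf hab hp ha hb id

lemma variance_of_measure_eq (hf : Measurable f) (hab : a ≠ b) (hp : 0 ≤ p)
    (ha : μ {ω | f ω = a} = ENNReal.ofReal p) (hb : μ {ω | f ω = b} = 1 - ENNReal.ofReal p) :
    variance f μ = (a - b) ^ 2 * p * (1 - p) := by
  rw [variance_eq_sub (memLp_of_measure_eq hf hab ha hb 2)]
  simp only [Pi.pow_apply]
  rw [integral_comp_of_measure_eq hf hab hp ha hb (· ^ 2), integral_of_measure_eq hf hab hp ha hb]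
  ring

end TwoPoint

lemma integral_sq_sum_mul_of_pairwise_indepFun {Ω ι : Type*} [MeasurableSpace Ω]
    {μ : Measure Ω} [IsProbabilityMeasure μ] [Fintype ι] {X : ι → Ω → ℝ}
    (hX : ∀ j, MemLp (X j) 2 μ) (hindep : Pairwise fun j k => IndepFun (X j) (X k) μ)
    (c : ι → ℝ) :
    ∫ ω, (∑ j, X j ω * c j) ^ 2 ∂μ =
      ∑ j, variance (X j) μ * c j ^ 2 + (∑ j, (∫ ω, X j ω ∂μ) * c j) ^ 2 := by
  set Y : ι → Ω → ℝ := fun j ω => X j ω * c j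
  have hY : ∀ j, MemLp (Y j) 2 μ := fun j => (hX j).mul_const (c j)
  have hsum : (fun ω => ∑ j, X j ω * c j) = ∑ j, Y j := by
    ext ω; simp [Y, Finset.sum_apply]
  have hvar : variance (∑ j, Y j) μ = ∑ j, variance (X j) μ * c j ^ 2 := by
    rw [IndepFun.variance_sum (fun j _ => hY j)
      fun j _ k _ hjk => (hindep hjk).comp (measurable_mul_const (c j)) (measurable_mul_const (c k))]
    exact Finset.sum_congr rfl fun j _ => variance_mul_const (c j) (X j) μ
  have hmean : ∫ ω, ∑ j, X j ω * c j ∂μ = ∑ j, (∫ ω, X j ω ∂μ) * c j := by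
    rw [integral_finsetSum _ fun j _ => (hY j).integrable one_le_two]
    exact Finset.sum_congr rfl fun j _ => integral_mul_const (c j) _
  have hS : MemLp (∑ j, Y j) 2 μ := memLp_finsetSum' _ fun j _ => hY j
  rw [← hvar, variance_eq_sub hS, ← hsum, ← hmean]
  simp only [Pi.pow_apply]
  ring

lemma sum_comp_of_balanced {n : ℕ} {u : Fin n → ℝ} (hu : ∀ i, u i = 1 ∨ u i = -1)
    (hbal : 2 * (Finset.univ.filter fun i => u i = 1).card = n) (g : ℝ → ℝ) :
    ∑ i, g (u i) = n / 2 * (g 1 + g (-1)) := by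
  have hg : ∀ i, g (u i) = if u i = 1 then g 1 else g (-1) := fun i => by
    rcases hu i with h | h <;> norm_num [h]
  have hcard : ((Finset.univ.filter fun i => u i = 1).card : ℝ)
      + (Finset.univ.filter fun i => ¬u i = 1).card = n := by
    exact_mod_cast (Finset.card_filter_add_card_filter_not (fun i => u i = 1)).trans
      (Finset.card_fin n)
  have hbal' : 2 * ((Finset.univ.filter fun i => u i = 1).card : ℝ) = n := by exact_mod_cast hbal
  have hpos : ((Finset.univ.filter fun i => u i = 1).card : ℝ) = n / 2 := by linarith
  have hneg : ((Finset.univ.filter fun i => ¬u i = 1).card : ℝ) = n / 2 := by linarith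
  simp only [hg, Finset.sum_ite, Finset.sum_const, nsmul_eq_mul, hpos, hneg]
  ring

lemma sum_comp_mul_of_balanced {n : ℕ} {u : Fin n → ℝ} (hu : ∀ i, u i = 1 ∨ u i = -1)
    (hbal : 2 * (Finset.univ.filter fun i => u i = 1).card = n) (g : ℝ → ℝ) {s : ℝ}
    (hs : s = 1 ∨ s = -1) :
    ∑ i, g (u i * s) = n / 2 * (g 1 + g (-1)) := by
  rw [sum_comp_of_balanced hu hbal fun t => g (t * s)]
  rcases hs with rfl | rfl <;> simp only [mul_one, mul_neg, neg_neg, add_comm]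

noncomputable def blockProb (δ q s : ℝ) : ℝ := if s = 1 then δ * q else (2 - δ) * q

@[simp]
lemma blockProb_one (δ q : ℝ) : blockProb δ q 1 = δ * q := if_pos rfl

@[simp]
lemma blockProb_neg_one (δ q : ℝ) : blockProb δ q (-1) = (2 - δ) * q :=
  if_neg (by norm_num)

lemma blockProb_nonneg {δ q : ℝ} (hδ : δ ∈ Set.Icc (0 : ℝ) 2) (hq : 0 ≤ q) (s : ℝ) :
    0 ≤ blockProb δ q s := by
  unfold blockProb
  split_ifs
  · exact mul_nonneg hδ.1 hq
  · exact mul_nonneg (sub_nonneg.2 hδ.2) hq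

lemma blockProb_sub_eq {δ q s : ℝ} (hs : s = 1 ∨ s = -1) :
    blockProb δ q s - q = (δ - 1) * q * s := by
  rcases hs with rfl | rfl <;> norm_num [blockProb] <;> ring

namespace IsCenteredBlockMatrix

variable {n₁ n₂ : ℕ} {u : Fin n₁ → ℝ} {v : Fin n₂ → ℝ} {δ q : ℝ} {Ω : Type*}
  [MeasurableSpace Ω] {μ : Measure Ω} {M : Ω → Matrix (Fin n₁) (Fin n₂) ℝ}

lemma pairwise_indepFun_row (hM : IsCenteredBlockMatrix u v δ q μ M) (i : Fin n₁) :
    Pairwise fun j k => IndepFun (fun ω => M ω i j) (fun ω => M ω i k) μ :=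
  fun j k hjk => hM.indep.indepFun (i := (i, j)) (j := (i, k)) (by simpa using hjk)

variable [IsProbabilityMeasure μ]

lemma memLp_entry (hM : IsCenteredBlockMatrix u v δ q μ M) (i : Fin n₁) (j : Fin n₂) :
    MemLp (fun ω => M ω i j) 2 μ :=
  memLp_of_measure_eq (hM.meas i j) (by norm_num) (hM.prob_hi i j) (hM.prob_lo i j) 2

lemma memLp_mulVec (hM : IsCenteredBlockMatrix u v δ q μ M) (y : Fin n₂ → ℝ) (i : Fin n₁) :
    MemLp (fun ω => (M ω *ᵥ y) i) 2 μ :=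
  memLp_finsetSum (f := fun j ω => M ω i j * y j) Finset.univ
    fun j _ => (hM.memLp_entry i j).mul_const (y j)

lemma integral_entry (hM : IsCenteredBlockMatrix u v δ q μ M) (hδ : δ ∈ Set.Icc (0 : ℝ) 2)
    (hq : 0 ≤ q) (i : Fin n₁) (j : Fin n₂) :
    ∫ ω, M ω i j ∂μ = blockProb δ q (u i * v j) - q := by
  rw [integral_of_measure_eq (hM.meas i j) (by norm_num) (blockProb_nonneg hδ hq _)
    (hM.prob_hi i j) (hM.prob_lo i j)]
  ring

lemma variance_entry (hM : IsCenteredBlockMatrix u v δ q μ M) (hδ : δ ∈ Set.Icc (0 : ℝ) 2)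
    (hq : 0 ≤ q) (i : Fin n₁) (j : Fin n₂) :
    variance (fun ω => M ω i j) μ =
      blockProb δ q (u i * v j) * (1 - blockProb δ q (u i * v j)) := by
  rw [variance_of_measure_eq (hM.meas i j) (by norm_num) (blockProb_nonneg hδ hq _)
    (hM.prob_hi i j) (hM.prob_lo i j)]
  ring

lemma integral_sq_mulVec (hM : IsCenteredBlockMatrix u v δ q μ M)
    (hδ : δ ∈ Set.Icc (0 : ℝ) 2) (hq : 0 ≤ q) (hu : ∀ i, u i = 1 ∨ u i = -1)
    (hv : ∀ j, v j = 1 ∨ v j = -1) (y : Fin n₂ → ℝ) (i : Fin n₁) :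
    ∫ ω, (M ω *ᵥ y) i ^ 2 ∂μ =
      ∑ j, blockProb δ q (u i * v j) * (1 - blockProb δ q (u i * v j)) * y j ^ 2
        + ((δ - 1) * q) ^ 2 * (v ⬝ᵥ y) ^ 2 := by
  have hsign : ∀ j, u i * v j = 1 ∨ u i * v j = -1 := fun j => by
    rcases hu i with h | h <;> rcases hv j with h' | h' <;> simp [h, h']
  have hmean : ∑ j, (∫ ω, M ω i j ∂μ) * y j = (δ - 1) * q * u i * (v ⬝ᵥ y) := by
    simp only [hM.integral_entry hδ hq, fun j => blockProb_sub_eq (δ := δ) (q := q) (hsign j),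
      dotProduct, Finset.mul_sum]
    exact Finset.sum_congr rfl fun j _ => by ring
  have hu_sq : u i ^ 2 = 1 := by rcases hu i with h | h <;> simp [h]
  calc ∫ ω, (M ω *ᵥ y) i ^ 2 ∂μ
      = ∑ j, variance (fun ω => M ω i j) μ * y j ^ 2
          + (∑ j, (∫ ω, M ω i j ∂μ) * y j) ^ 2 :=
        integral_sq_sum_mul_of_pairwise_indepFun (fun j => hM.memLp_entry i j)
          (hM.pairwise_indepFun_row i) y
    _ = _ := by
      simp only [hM.variance_entry hδ hq, hmean, mul_pow, hu_sq]
      ring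

end IsCenteredBlockMatrix

theorem expectation_norm_sq_My_general {n₁ n₂ : ℕ}
    (u : Fin n₁ → ℝ) (v : Fin n₂ → ℝ) (δ q : ℝ)
    (hδ : δ ∈ Set.Icc (0:ℝ) 2) (hq : q ∈ Set.Ioo (0:ℝ) 1)
    (hu : ∀ i, u i = 1 ∨ u i = -1) (hv : ∀ j, v j = 1 ∨ v j = -1)
    (hbal : 2 * (Finset.univ.filter fun i => u i = 1).card = n₁)
    {Ω : Type*} [MeasurableSpace Ω] (μ : Measure Ω) [IsProbabilityMeasure μ]
    (M : Ω → Matrix (Fin n₁) (Fin n₂) ℝ)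
    (hM : IsCenteredBlockMatrix u v δ q μ M) :
    ∀ y : Fin n₂ → ℝ,
      ∫ ω, ∑ i, ((M ω).mulVec y i) ^ 2 ∂μ =
        (∑ j, (y j) ^ 2) * (↑n₁ * q - (↑n₁ * q ^ 2 / 2) * (δ ^ 2 + (2 - δ) ^ 2))
          + (δ - 1) ^ 2 * q ^ 2 * ↑n₁ * (v ⬝ᵥ y) ^ 2 := by
  intro y
  have hcol : ∀ j, ∑ i, blockProb δ q (u i * v j) * (1 - blockProb δ q (u i * v j)) =
      n₁ / 2 * (δ * q * (1 - δ * q) + (2 - δ) * q * (1 - (2 - δ) * q)) := fun j => by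
    simpa only [blockProb_one, blockProb_neg_one] using
      sum_comp_mul_of_balanced hu hbal (fun t => blockProb δ q t * (1 - blockProb δ q t)) (hv j)
  rw [integral_finsetSum _ fun i _ => (hM.memLp_mulVec y i).integrable_sq]
  simp only [hM.integral_sq_mulVec hδ hq.1.le hu hv, Finset.sum_add_distrib]
  rw [Finset.sum_comm]
  simp only [← Finset.sum_mul, hcol, ← Finset.mul_sum, Finset.sum_const, Finset.card_univ,
    Fintype.card_fin, nsmul_eq_mul]
  ring

/-- `E[‖M y‖₂²] = ‖y‖₂² · (n₁q - (n₁q²/2)(δ² + (2-δ)²)) + (δ-1)²·q²·n₁·(v ⬝ y)²`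
for the centered block random matrix, when `n₁` is even and `u` is balanced. -/
theorem expectation_norm_sq_My {n₁ n₂ : ℕ}
    (u : Fin n₁ → ℝ) (v : Fin n₂ → ℝ) (δ q : ℝ)
    (hδ : δ ∈ Set.Icc (0:ℝ) 2) (hq : q ∈ Set.Ioo (0:ℝ) 1)
    (hδq : δ * q ≤ 1) (hδq' : (2 - δ) * q ≤ 1)
    (hu : ∀ i, u i = 1 ∨ u i = -1) (hv : ∀ j, v j = 1 ∨ v j = -1)
    (hn₁ : Even n₁)
    (hbal : 2 * (Finset.univ.filter fun i => u i = 1).card = n₁)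
    {Ω : Type*} [MeasurableSpace Ω] (μ : Measure Ω) [IsProbabilityMeasure μ]
    (M : Ω → Matrix (Fin n₁) (Fin n₂) ℝ)
    (hM : IsCenteredBlockMatrix u v δ q μ M) :
    ∀ y : Fin n₂ → ℝ,
      ∫ ω, ∑ i, ((M ω).mulVec y i) ^ 2 ∂μ =
        (∑ j, (y j) ^ 2) * (↑n₁ * q - (↑n₁ * q ^ 2 / 2) * (δ ^ 2 + (2 - δ) ^ 2))
          + (δ - 1) ^ 2 * q ^ 2 * ↑n₁ * (v ⬝ᵥ y) ^ 2 :=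
  expectation_norm_sq_My_general u v δ q hδ hq hu hv hbal μ M hM
end

section
/- There exists an absolute constant C > 0 with the following property. Let M be the centered block random matrix M(n₁,n₂,u,v,δ,q) and suppose n₁ · q ≤ 1. Then for every x ∈ ℝ^{n₁}, Var[ ‖Mᵀ x‖₂² ] ≤ C · n₂ · n₁ · q · ‖x‖∞⁴, where ‖x‖∞ is the maximum absolute value of a coordinate of x. -/
/-!
Let `S_j = (Mᵀ x)_j`. Distinct columns of `M` are independent, so
`Var ‖Mᵀ x‖² = ∑ⱼ Var (S_j²) ≤ ∑ⱼ E S_j⁴`, and `|S_j| ≤ ‖x‖∞ T_j` where `T_j = ∑ᵢ |M i j|` is a sum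
of independent `[0,1]`-valued variables of total mean `m ≤ 3 n₁ q ≤ 3`. For such a sum,
`T⁴ ≤ 4! (eᵀ - 1)` and `E eᵀ = ∏ᵢ E e^{|M i j|} ≤ ∏ᵢ (1 + 2 E|M i j|) ≤ e^{2m}`, whence
`E T⁴ ≤ 4! (e^{2m} - 1) ≤ 4! · 2m · e^{2m} = O(n₁ q)`.
-/

open MeasureTheory ProbabilityTheory Matrix

open Real Finset

lemma Matrix.abs_transpose_mulVec_le {m n : Type*} [Fintype m] (A : Matrix m n ℝ) (x : m → ℝ)
    (j : n) : |(Aᵀ *ᵥ x) j| ≤ ‖x‖ * ∑ i, |A i j| := by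
  rw [mulVec_transpose, vecMul, dotProduct, mul_sum]
  refine (abs_sum_le_sum_abs _ _).trans (sum_le_sum fun i _ => ?_)
  rw [abs_mul, ← Real.norm_eq_abs (x i)]
  gcongr
  exact norm_le_pi_norm x i

lemma Real.exp_sub_one_le_mul_exp (y : ℝ) : exp y - 1 ≤ y * exp y := by
  have h' : exp (-y) * exp y = 1 := by rw [← exp_add, neg_add_cancel, exp_zero]
  nlinarith [add_one_le_exp (-y), exp_pos y]

open Nat in
lemma Real.pow_le_factorial_mul_exp_sub_one {x : ℝ} (hx : 0 ≤ x) {k : ℕ} (hk : k ≠ 0) :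
    x ^ k ≤ k ! * (exp x - 1) := by
  have hsub : ({0, k} : Finset ℕ) ⊆ range (k + 1) := by
    intro i; simp only [mem_insert, mem_singleton, mem_range]; omega
  have h := (sum_le_sum_of_subset_of_nonneg hsub fun i _ _ => by positivity).trans
    (sum_le_exp_of_nonneg hx (k + 1))
  rw [sum_pair hk.symm, pow_zero, factorial_zero, cast_one, div_one] at h
  rw [← div_le_iff₀' (by positivity)]
  linarith

section Independence

variable {Ω : Type*} [MeasurableSpace Ω] {μ : Measure Ω}

lemma ProbabilityTheory.iIndepFun.indepFun_column {ι κ β : Type*} [Fintype ι] [MeasurableSpace β]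
    {X : ι × κ → Ω → β} (hX : iIndepFun X μ) (hmeas : ∀ p, Measurable (X p)) {j j' : κ}
    (hjj' : j ≠ j') : IndepFun (fun ω i => X (i, j) ω) (fun ω i => X (i, j') ω) μ := by
  have hdisj : Disjoint (univ ×ˢ {j} : Finset (ι × κ)) (univ ×ˢ {j'}) :=
    disjoint_product.2 (Or.inr (disjoint_singleton.2 hjj'))
  have hcol : ∀ c : κ, Measurable fun (w : (univ ×ˢ {c} : Finset (ι × κ)) → β) (i : ι) =>
      w ⟨(i, c), by simp⟩ := fun c => measurable_pi_lambda _ fun i => measurable_pi_apply _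
  exact (hX.indepFun_finset _ _ hdisj hmeas).comp (hcol j) (hcol j')

end Independence

section Moments

variable {Ω : Type*} [MeasurableSpace Ω] {μ : Measure Ω} [IsProbabilityMeasure μ]

lemma ProbabilityTheory.mgf_one_le_exp_two_mul_integral {Z : Ω → ℝ} (hZ : AEMeasurable Z μ)
    (hZ01 : ∀ᵐ ω ∂μ, Z ω ∈ Set.Icc (0 : ℝ) 1) : mgf Z μ 1 ≤ exp (2 * μ[Z]) := by
  have hZint : Integrable Z μ := Integrable.of_bound hZ.aestronglyMeasurable 1 <| by
    filter_upwards [hZ01] with ω hω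
    rw [Real.norm_eq_abs, abs_le]; constructor <;> linarith [hω.1, hω.2]
  have hexp_le : ∀ᵐ ω ∂μ, exp (1 * Z ω) ≤ 1 + 2 * Z ω := by
    filter_upwards [hZ01] with ω ⟨h0, h1⟩
    have := abs_exp_sub_one_le (x := Z ω) (by rwa [abs_of_nonneg h0])
    rw [one_mul, abs_of_nonneg h0] at *
    linarith [le_abs_self (exp (Z ω) - 1)]
  calc mgf Z μ 1 ≤ ∫ ω, (1 + 2 * Z ω) ∂μ :=
        integral_mono_of_nonneg (ae_of_all _ fun _ => (exp_pos _).le)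
          ((integrable_const 1).add (hZint.const_mul 2)) hexp_le
    _ = 1 + 2 * μ[Z] := by
        rw [integral_add (integrable_const 1) (hZint.const_mul 2), integral_const_mul]; simp
    _ ≤ exp (2 * μ[Z]) := by linarith [add_one_le_exp (2 * μ[Z])]

lemma ProbabilityTheory.iIndepFun.mgf_sum_le {ι : Type*} {Z : ι → Ω → ℝ} (hZ : iIndepFun Z μ)
    (hmeas : ∀ i, Measurable (Z i)) (s : Finset ι)
    (hZ01 : ∀ i ∈ s, ∀ᵐ ω ∂μ, Z i ω ∈ Set.Icc (0 : ℝ) 1) :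
    mgf (∑ i ∈ s, Z i) μ 1 ≤ exp (2 * ∑ i ∈ s, μ[Z i]) := by
  rw [hZ.mgf_sum hmeas, mul_sum, exp_sum]
  exact prod_le_prod (fun _ _ => mgf_nonneg) fun i hi =>
    mgf_one_le_exp_two_mul_integral (hmeas i).aemeasurable (hZ01 i hi)

open Nat in
lemma ProbabilityTheory.integral_pow_le_factorial_mul_mgf_sub_one {T : Ω → ℝ}
    (hT : AEMeasurable T μ) (hT0 : ∀ᵐ ω ∂μ, 0 ≤ T ω)
    (hint : Integrable (fun ω => exp (1 * T ω)) μ) {k : ℕ} (hk : k ≠ 0) :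
    ∫ ω, T ω ^ k ∂μ ≤ k ! * (mgf T μ 1 - 1) := by
  have hle : ∀ᵐ ω ∂μ, T ω ^ k ≤ k ! * (exp (1 * T ω) - 1) := by
    filter_upwards [hT0] with ω h0
    rw [one_mul]; exact pow_le_factorial_mul_exp_sub_one h0 hk
  have hrhs : Integrable (fun ω => k ! * (exp (1 * T ω) - 1)) μ :=
    (hint.sub (integrable_const 1)).const_mul _
  have hpow : Integrable (fun ω => T ω ^ k) μ := by
    refine hrhs.mono' (by fun_prop) ?_
    filter_upwards [hT0, hle] with ω h0 h
    rwa [Real.norm_eq_abs, abs_of_nonneg (by positivity)]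
  calc ∫ ω, T ω ^ k ∂μ ≤ ∫ ω, k ! * (exp (1 * T ω) - 1) ∂μ := integral_mono_ae hpow hrhs hle
    _ = k ! * (mgf T μ 1 - 1) := by
        rw [integral_const_mul, integral_sub hint (integrable_const 1)]; simp [mgf]

open Nat in
lemma ProbabilityTheory.iIndepFun.integral_sum_pow_le {ι : Type*} {Z : ι → Ω → ℝ}
    (hZ : iIndepFun Z μ) (hmeas : ∀ i, Measurable (Z i)) (s : Finset ι)
    (hZ01 : ∀ i ∈ s, ∀ᵐ ω ∂μ, Z i ω ∈ Set.Icc (0 : ℝ) 1) {k : ℕ} (hk : k ≠ 0) :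
    ∫ ω, (∑ i ∈ s, Z i ω) ^ k ∂μ ≤
      k ! * (2 * ∑ i ∈ s, μ[Z i]) * exp (2 * ∑ i ∈ s, μ[Z i]) := by
  have hT : ∀ᵐ ω ∂μ, (∑ i ∈ s, Z i) ω ∈ Set.Icc (0 : ℝ) #s := by
    filter_upwards [(ae_ball_iff s.countable_toSet).2 hZ01] with ω hω
    rw [Finset.sum_apply]
    exact ⟨sum_nonneg fun i hi => (hω i hi).1,
      (sum_le_card_nsmul s _ 1 fun i hi => (hω i hi).2).trans_eq (by simp)⟩
  have hint : Integrable (fun ω => exp (1 * (∑ i ∈ s, Z i) ω)) μ :=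
    Integrable.of_bound (by fun_prop) (exp #s) <| by
      filter_upwards [hT] with ω hω
      rw [Real.norm_eq_abs, abs_of_pos (exp_pos _), one_mul]
      exact exp_le_exp.2 hω.2
  have hmoment :=
    integral_pow_le_factorial_mul_mgf_sub_one (by fun_prop) (hT.mono fun _ h => h.1) hint hk
  simp only [Finset.sum_apply] at hmoment
  calc _ ≤ k ! * (mgf (∑ i ∈ s, Z i) μ 1 - 1) := hmoment
    _ ≤ k ! * (exp (2 * ∑ i ∈ s, μ[Z i]) - 1) := by
        gcongr; exact hZ.mgf_sum_le hmeas s hZ01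
    _ ≤ _ := by
        rw [mul_assoc]; gcongr; exact exp_sub_one_le_mul_exp _

end Moments

namespace IsCenteredBlockMatrix

variable {n₁ n₂ : ℕ} {u : Fin n₁ → ℝ} {v : Fin n₂ → ℝ} {δ q : ℝ} {Ω : Type*}
  [MeasurableSpace Ω] {μ : Measure Ω} {M : Ω → Matrix (Fin n₁) (Fin n₂) ℝ}

lemma measurable_transpose_mulVec_apply (hM : IsCenteredBlockMatrix u v δ q μ M)
    (x : Fin n₁ → ℝ) (j : Fin n₂) : Measurable fun ω => ((M ω)ᵀ *ᵥ x) j := by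
  simp only [mulVec_transpose, vecMul, dotProduct]
  exact Finset.measurable_sum _ fun i _ => (hM.meas i j).const_mul (x i)

lemma indepFun_transpose_mulVec_apply (hM : IsCenteredBlockMatrix u v δ q μ M)
    (x : Fin n₁ → ℝ) {j j' : Fin n₂} (hjj' : j ≠ j') :
    IndepFun (fun ω => ((M ω)ᵀ *ᵥ x) j) (fun ω => ((M ω)ᵀ *ᵥ x) j') μ := by
  simp only [mulVec_transpose, vecMul, dotProduct]
  exact (hM.indep.indepFun_column (fun p => hM.meas p.1 p.2) hjj').comp
      (φ := fun c : Fin n₁ → ℝ => ∑ i, x i * c i) (ψ := fun c : Fin n₁ → ℝ => ∑ i, x i * c i)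
      (by fun_prop) (by fun_prop)

lemma iIndepFun_abs_column (hM : IsCenteredBlockMatrix u v δ q μ M) (j : Fin n₂) :
    iIndepFun (fun i ω => |M ω i j|) μ :=
  (hM.indep.precomp (g := fun i => (i, j)) fun _ _ h => congrArg Prod.fst h).comp
    (fun _ => abs) fun _ => measurable_abs

variable [IsProbabilityMeasure μ]

lemma ae_eq_or (hM : IsCenteredBlockMatrix u v δ q μ M) (i : Fin n₁) (j : Fin n₂) :
    ∀ᵐ ω ∂μ, M ω i j = 1 - q ∨ M ω i j = -q := by
  have hmeas : ∀ c, MeasurableSet {ω | M ω i j = c} :=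
    fun c => hM.meas i j (measurableSet_singleton c)
  have hdisj : Disjoint {ω | M ω i j = 1 - q} {ω | M ω i j = -q} :=
    Set.disjoint_left.2 fun ω (h₁ : _ = _) (h₂ : _ = _) => by linarith
  have hunion : μ ({ω | M ω i j = 1 - q} ∪ {ω | M ω i j = -q}) = 1 := by
    -- `prob_lo` is a truncated subtraction in `ℝ≥0∞`; it is exact since `μ A ≤ 1`.
    have hle := hM.prob_hi i j ▸ prob_le_one (μ := μ) (s := {ω | M ω i j = 1 - q})
    rw [measure_union hdisj (hmeas _), hM.prob_lo, hM.prob_hi, add_tsub_cancel_of_le hle]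
  exact (ae_mem_iff_measure_eq ((hmeas _).union (hmeas _)).nullMeasurableSet).2
    (by rw [hunion, measure_univ])

lemma ae_abs_mem_Icc (hM : IsCenteredBlockMatrix u v δ q μ M) (hq : q ∈ Set.Icc (0 : ℝ) 1)
    (i : Fin n₁) (j : Fin n₂) : ∀ᵐ ω ∂μ, |M ω i j| ∈ Set.Icc (0 : ℝ) 1 := by
  filter_upwards [hM.ae_eq_or i j] with ω hω
  refine ⟨abs_nonneg _, ?_⟩
  rcases hω with h | h <;> rw [h, abs_le] <;> constructor <;> linarith [hq.1, hq.2]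

lemma integral_abs_le (hM : IsCenteredBlockMatrix u v δ q μ M) (hδ : δ ∈ Set.Icc (0 : ℝ) 2)
    (hq : q ∈ Set.Icc (0 : ℝ) 1) (i : Fin n₁) (j : Fin n₂) : ∫ ω, |M ω i j| ∂μ ≤ 3 * q := by
  set A := {ω | M ω i j = 1 - q}
  have hA : MeasurableSet A := hM.meas i j (measurableSet_singleton _)
  have hle : ∀ᵐ ω ∂μ, |M ω i j| ≤ q + A.indicator 1 ω := by
    filter_upwards [hM.ae_eq_or i j] with ω hω
    rcases hω with h | h
    · rw [Set.indicator_of_mem (show ω ∈ A from h), h, abs_of_nonneg (by linarith [hq.2])]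
      rw [Pi.one_apply]; linarith [hq.1]
    · rw [h, abs_neg, abs_of_nonneg hq.1]
      linarith [Set.indicator_nonneg (fun _ _ => by simp) ω (s := A) (f := (1 : Ω → ℝ))]
  have hind : Integrable (A.indicator (1 : Ω → ℝ)) μ := (integrable_const 1).indicator hA
  have hprob : μ.real A ≤ 2 * q := by
    have hp : 0 ≤ (if u i * v j = 1 then δ * q else (2 - δ) * q) ∧
        (if u i * v j = 1 then δ * q else (2 - δ) * q) ≤ 2 * q := by
      split_ifs <;> constructor <;> nlinarith [hδ.1, hδ.2, hq.1]
    rw [measureReal_def, hM.prob_hi, ENNReal.toReal_ofReal hp.1]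
    exact hp.2
  calc ∫ ω, |M ω i j| ∂μ ≤ ∫ ω, (q + A.indicator 1 ω) ∂μ :=
        integral_mono_of_nonneg (ae_of_all _ fun _ => abs_nonneg _)
          ((integrable_const q).add hind) hle
    _ = q + μ.real A := by
        rw [integral_add (integrable_const q) hind, integral_indicator_one hA]; simp
    _ ≤ 3 * q := by linarith

lemma integral_sum_abs_pow_four_le (hM : IsCenteredBlockMatrix u v δ q μ M)
    (hδ : δ ∈ Set.Icc (0 : ℝ) 2) (hq : q ∈ Set.Icc (0 : ℝ) 1) (hn₁q : n₁ * q ≤ 1) (j : Fin n₂) :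
    ∫ ω, (∑ i, |M ω i j|) ^ 4 ∂μ ≤ 144 * exp 6 * (n₁ * q) := by
  have hmoment := (hM.iIndepFun_abs_column j).integral_sum_pow_le (fun i => (hM.meas i j).abs)
    univ (fun i _ => hM.ae_abs_mem_Icc hq i j) (k := 4) (by norm_num)
  set m := ∑ i, ∫ ω, |M ω i j| ∂μ
  have hm0 : 0 ≤ m := sum_nonneg fun i _ => integral_nonneg fun _ => abs_nonneg _
  have hm : m ≤ 3 * (n₁ * q) := (sum_le_sum fun i _ => hM.integral_abs_le hδ hq i j).trans
    (by rw [sum_const, card_univ, Fintype.card_fin, nsmul_eq_mul]; linarith)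
  calc _ ≤ (Nat.factorial 4 : ℝ) * (2 * m) * exp (2 * m) := hmoment
    _ ≤ (Nat.factorial 4 : ℝ) * (6 * (n₁ * q)) * exp 6 := by
        have : 0 ≤ (n₁ : ℝ) * q := mul_nonneg n₁.cast_nonneg hq.1
        gcongr (Nat.factorial 4 : ℝ) * ?_ * exp ?_ <;> linarith
    _ = 144 * exp 6 * (n₁ * q) := by
        rw [show (Nat.factorial 4 : ℝ) = 24 by norm_num [Nat.factorial]]; ring

lemma ae_sum_abs_le (hM : IsCenteredBlockMatrix u v δ q μ M) (hq : q ∈ Set.Icc (0 : ℝ) 1)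
    (j : Fin n₂) : ∀ᵐ ω ∂μ, ∑ i, |M ω i j| ≤ n₁ := by
  filter_upwards [ae_all_iff.2 fun i => hM.ae_abs_mem_Icc hq i j] with ω hω
  exact (sum_le_card_nsmul _ _ 1 fun i _ => (hω i).2).trans_eq (by simp)

lemma ae_abs_transpose_mulVec_apply_le (hM : IsCenteredBlockMatrix u v δ q μ M)
    (hq : q ∈ Set.Icc (0 : ℝ) 1) (x : Fin n₁ → ℝ) (j : Fin n₂) :
    ∀ᵐ ω ∂μ, |((M ω)ᵀ *ᵥ x) j| ≤ ‖x‖ * n₁ := by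
  filter_upwards [hM.ae_sum_abs_le hq j] with ω hω
  exact (abs_transpose_mulVec_le (M ω) x j).trans (by gcongr)

lemma integral_transpose_mulVec_apply_pow_four_le (hM : IsCenteredBlockMatrix u v δ q μ M)
    (hδ : δ ∈ Set.Icc (0 : ℝ) 2) (hq : q ∈ Set.Icc (0 : ℝ) 1) (hn₁q : n₁ * q ≤ 1)
    (x : Fin n₁ → ℝ) (j : Fin n₂) :
    ∫ ω, ((M ω)ᵀ *ᵥ x) j ^ 4 ∂μ ≤ 144 * exp 6 * n₁ * q * ‖x‖ ^ 4 := by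
  have hint : Integrable (fun ω => (∑ i, |M ω i j|) ^ 4) μ :=
    Integrable.of_bound
      ((Finset.measurable_sum _ fun i _ => (hM.meas i j).abs).pow_const 4).aestronglyMeasurable
      ((n₁ : ℝ) ^ 4) <| by
      filter_upwards [hM.ae_sum_abs_le hq j] with ω hω
      rw [Real.norm_eq_abs, abs_pow, abs_of_nonneg (sum_nonneg fun i _ => abs_nonneg _)]
      exact pow_le_pow_left₀ (sum_nonneg fun i _ => abs_nonneg _) hω 4
  have hle : ∀ ω, ((M ω)ᵀ *ᵥ x) j ^ 4 ≤ ‖x‖ ^ 4 * (∑ i, |M ω i j|) ^ 4 := fun ω => by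
    rw [← Even.pow_abs (by decide), ← mul_pow]
    exact pow_le_pow_left₀ (abs_nonneg _) (abs_transpose_mulVec_le (M ω) x j) 4
  calc ∫ ω, ((M ω)ᵀ *ᵥ x) j ^ 4 ∂μ ≤ ∫ ω, ‖x‖ ^ 4 * (∑ i, |M ω i j|) ^ 4 ∂μ :=
        integral_mono_of_nonneg (ae_of_all _ fun _ => by positivity) (hint.const_mul _)
          (ae_of_all _ hle)
    _ ≤ ‖x‖ ^ 4 * (144 * exp 6 * (n₁ * q)) := by
        rw [integral_const_mul]; gcongr; exact hM.integral_sum_abs_pow_four_le hδ hq hn₁q j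
    _ = 144 * exp 6 * n₁ * q * ‖x‖ ^ 4 := by ring

end IsCenteredBlockMatrix

/-- There is an absolute constant `C > 0` such that, for the centered block random
matrix with `n₁·q ≤ 1`, `Var[‖Mᵀ x‖₂²] ≤ C · n₂ · n₁ · q · ‖x‖∞⁴` for every `x`
(here `‖x‖` is the sup norm on `Fin n₁ → ℝ`). -/
theorem variance_norm_sq_MTx : ∃ C : ℝ, 0 < C ∧
    ∀ (n₁ n₂ : ℕ) (u : Fin n₁ → ℝ) (v : Fin n₂ → ℝ) (δ q : ℝ),
    δ ∈ Set.Icc (0:ℝ) 2 → q ∈ Set.Ioo (0:ℝ) 1 →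
    δ * q ≤ 1 → (2 - δ) * q ≤ 1 →
    (∀ i, u i = 1 ∨ u i = -1) → (∀ j, v j = 1 ∨ v j = -1) →
    (↑n₁ * q ≤ 1) →
    ∀ {Ω : Type} [inst : MeasurableSpace Ω] (μ : Measure Ω), IsProbabilityMeasure μ →
    ∀ M : Ω → Matrix (Fin n₁) (Fin n₂) ℝ, IsCenteredBlockMatrix u v δ q μ M →
    ∀ x : Fin n₁ → ℝ,
      ProbabilityTheory.variance (fun ω => ∑ j, ((M ω)ᵀ.mulVec x j) ^ 2) μ ≤
        C * ↑n₂ * ↑n₁ * q * ‖x‖ ^ 4 := by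
  refine ⟨144 * exp 6, by positivity, ?_⟩
  intro n₁ n₂ u v δ q hδ hq _ _ _ _ hn₁q Ω _ μ _ M hM x
  have hq' : q ∈ Set.Icc (0 : ℝ) 1 := Set.Ioo_subset_Icc_self hq
  set Y : Fin n₂ → Ω → ℝ := fun j ω => ((M ω)ᵀ *ᵥ x) j ^ 2
  have hYmeas : ∀ j, Measurable (Y j) := fun j =>
    (hM.measurable_transpose_mulVec_apply x j).pow_const 2
  have hY : ∀ j, MemLp (Y j) 2 μ := fun j =>
    MemLp.of_bound (hYmeas j).aestronglyMeasurable ((‖x‖ * n₁) ^ 2) <| by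
      filter_upwards [hM.ae_abs_transpose_mulVec_apply_le hq' x j] with ω hω
      rw [Real.norm_eq_abs, abs_pow]
      exact pow_le_pow_left₀ (abs_nonneg _) hω 2
  have hindep : Set.Pairwise ↑(univ : Finset (Fin n₂)) fun j j' => IndepFun (Y j) (Y j') μ :=
    fun j _ j' _ hjj' => (hM.indepFun_transpose_mulVec_apply x hjj').comp
      (measurable_id.pow_const 2) (measurable_id.pow_const 2)
  calc variance (fun ω => ∑ j, Y j ω) μ = ∑ j, variance (Y j) μ := by
        rw [← IndepFun.variance_sum (fun j _ => hY j) hindep]; congr; ext; simp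
    _ ≤ ∑ j, ∫ ω, ((M ω)ᵀ *ᵥ x) j ^ 4 ∂μ := sum_le_sum fun j _ =>
        (variance_le_expectation_sq (hYmeas j).aestronglyMeasurable).trans_eq
          (by simp only [Y, Pi.pow_apply, ← pow_mul])
    _ ≤ ∑ _j : Fin n₂, 144 * exp 6 * n₁ * q * ‖x‖ ^ 4 := sum_le_sum fun j _ =>
        hM.integral_transpose_mulVec_apply_pow_four_le hδ hq' hn₁q x j
    _ = 144 * exp 6 * n₂ * n₁ * q * ‖x‖ ^ 4 := by
        rw [sum_const, card_univ, Fintype.card_fin, nsmul_eq_mul]; ring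
end
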